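/- arXiv:0806.0914 — 2 statements merged into one kernel-verified Lean document; each statement's English description precedes it below -/
import Mathlib

section
/- Uniqueness criterion at 1. Let 0 ≤ α < 1 < β, k := ⌈α+β⌉, A := {0,…,k−1}, γ := α+β−k+1 (then γ ∈ (0,1]). The string v^{α,β} always satisfies φ̄_∞^{α,β}(v^{α,β}) = 1 and φ̄_∞^{α,β}(σv^{α,β}) = γ, and the following are equivalent: (1) the pair of equations φ̄_∞^{α,β}(v) = 1 and φ̄_∞^{α,β}(σv) = γ has exactly one solution v ∈ A^ℕ; (2) either Ť_{α,β}(1) = 1 (i.e. 1 is a fixed point), or Ťⁿ_{α,β}(1) ≠ 1 for all n ≥ 1; (3) v^{α,β} is not periodic (σᵖv^{α,β} ≠ v^{α,β} for all p ≥ 1) or v^{α,β} is the constant string (k−1)^∞. -/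
/-!
`φ̄` is the clamp of `t ↦ (t − α)/β` to `[0,1]`, so it is monotone and `1/β`-Lipschitz, and
`φ̄_∞(x) = φ̄(x₀ + φ̄_∞(σx))`. The orbit `tₙ = Ťⁿ(1)` satisfies `tₙ = φ̄(vₙ + tₙ₊₁)` as well, and
since `φ̄` contracts, `φ̄_∞(σⁿv) = tₙ`; in particular `σᵖv = v` iff `tₚ = 1`.

Conversely, a solution `x` has top digit `x₀ = k − 1` and `φ̄_∞(σx) = t₁`. When `0 < tₘ, tₘ₊₁ < 1`,
the equation `φ̄(xₘ + φ̄_∞(σᵐ⁺¹x)) = tₘ` leaves only `xₘ = vₘ`, `φ̄_∞(σᵐ⁺¹x) = tₘ₊₁`, and when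
`Ť(1) = 1` every digit is pinned at `k − 1`; so `x = v`. If instead `tₘ₊₁ = 1 ≠ t₁` with `m ≥ 1`,
the digit `vₘ` can be raised by one at the cost of a tail `0^∞`: `v₀ ⋯ vₘ₋₁ (vₘ + 1) 0^∞` is a
second solution.
-/

open Filter Set

/-- The shift map on one-sided sequences. -/
def shft (x : ℕ → ℕ) : ℕ → ℕ := fun n => x (n + 1)

/-- Strict lexicographic order on one-sided sequences:
`x ≺ y` iff they differ and `x m < y m` at the first index `m` where they differ. -/
def lexLt (x y : ℕ → ℕ) : Prop := ∃ m, (∀ i, i < m → x i = y i) ∧ x m < y m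

/-- Lexicographic order `x ≼ y` on one-sided sequences. -/
def lexLe (x y : ℕ → ℕ) : Prop := x = y ∨ lexLt x y

/-- The map `φ̄^{α,β} : ℝ → [0,1]`:  `0` for `t ≤ α`, `(t-α)/β` for `α ≤ t ≤ α+β`,
`1` for `t ≥ α+β`. -/
noncomputable def phiB (α β t : ℝ) : ℝ :=
  if t ≤ α then 0 else if α + β ≤ t then 1 else (t - α) / β

/-- `φ̄ₙ^{α,β}(x) = φ̄^{α,β}(x₀ + φ̄^{α,β}(x₁ + ⋯ + φ̄^{α,β}(x_{n-1})⋯))`. -/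
noncomputable def phiBN (α β : ℝ) : ℕ → (ℕ → ℕ) → ℝ
  | 0, _ => 0
  | n + 1, x => phiB α β (x 0 + phiBN α β n (shft x))

/-- `φ̄_∞^{α,β}(x) = limₙ φ̄ₙ^{α,β}(x)`; the sequence `φ̄ₙ^{α,β}(x)` is nondecreasing in `n`
and bounded, so its limit is its supremum. -/
noncomputable def phiBInf (α β : ℝ) (x : ℕ → ℕ) : ℝ := ⨆ n, phiBN α β n x

/-- `T̂_{α,β}(x) = βx + α − ⌊βx + α⌋`. -/
noncomputable def Tlow (α β x : ℝ) : ℝ := β * x + α - ⌊β * x + α⌋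

/-- `Ť_{α,β}(x) = βx + α + 1 − ⌈βx + α⌉`. -/
noncomputable def Thigh (α β x : ℝ) : ℝ := β * x + α + 1 - ⌈β * x + α⌉

/-- `k = ⌈α + β⌉`, the size of the alphabet `A = {0, …, k-1}`. -/
noncomputable def kAB (α β : ℝ) : ℕ := (⌈α + β⌉).toNat

/-- The string `u^{α,β}`, the coding of the orbit of `0`:
`u^{α,β}ₙ = ⌊β T̂ⁿ_{α,β}(0) + α⌋`. -/
noncomputable def uItin (α β : ℝ) : ℕ → ℕ := fun n => (⌊β * (Tlow α β)^[n] 0 + α⌋).toNat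

/-- The string `v^{α,β}`, the coding of the orbit of `1`:
`v^{α,β}ₙ = ⌈β Ťⁿ_{α,β}(1) + α⌉ − 1`. -/
noncomputable def vItin (α β : ℝ) : ℕ → ℕ := fun n => (⌈β * (Thigh α β)^[n] 1 + α⌉ - 1).toNat

/-- The shift space `Σ(u,v) = {x ∈ A^ℕ : u ≼ σⁿx ≼ v for all n ≥ 0}`, `A = {0,…,k-1}`. -/
def SigSet (k : ℕ) (u v : ℕ → ℕ) : Set (ℕ → ℕ) :=
  {x | (∀ i, x i < k) ∧ ∀ n, lexLe u (shft^[n] x) ∧ lexLe (shft^[n] x) v}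

/-- The number of words of length `n` in the language of `Σ(u,v)` (prefixes of elements). -/
noncomputable def nWords (k : ℕ) (u v : ℕ → ℕ) (n : ℕ) : ℕ :=
  Nat.card {w : Fin n → ℕ // ∃ x ∈ SigSet k u v, ∀ i : Fin n, x i.1 = w i}

/-- The topological entropy (base 2) of `Σ(u,v)`:
`h = limₙ (1/n) log₂ card(Lₙ)` (the limit exists by subadditivity, so it equals the limsup;
it is `0` when `Σ(u,v) = ∅`). -/
noncomputable def entS (k : ℕ) (u v : ℕ → ℕ) : ℝ :=
  Filter.limsup (fun n : ℕ => Real.logb 2 (nWords k u v n) / (n : ℝ)) Filter.atTop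

/-- Concatenation of the word `w₀ ⋯ w_{p-1}` (the first `p` letters of `w`) with the
string `y`. -/
def wcat (p : ℕ) (w y : ℕ → ℕ) : ℕ → ℕ := fun n => if n < p then w n else y (n - p)

section PhiB

variable {α β : ℝ}

theorem phiB_eq_max_min (hβ : 0 < β) (t : ℝ) :
    phiB α β t = max (min ((t - α) / β) 1) 0 := by
  unfold phiB
  split_ifs with h1 h2
  · exact (max_eq_right ((min_le_left _ _).trans
      (div_nonpos_of_nonpos_of_nonneg (by linarith) hβ.le))).symm
  · rw [min_eq_right (by rw [le_div_iff₀ hβ]; linarith), max_eq_left zero_le_one]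
  · rw [min_eq_left (by rw [div_le_one hβ]; linarith),
      max_eq_left (div_nonneg (by linarith) hβ.le)]

theorem phiB_nonneg (hβ : 0 < β) (t : ℝ) : 0 ≤ phiB α β t := by
  rw [phiB_eq_max_min hβ]; exact le_max_right _ _

theorem phiB_le_one (hβ : 0 < β) (t : ℝ) : phiB α β t ≤ 1 := by
  rw [phiB_eq_max_min hβ]; exact max_le (min_le_right _ _) zero_le_one

theorem phiB_mono (hβ : 0 < β) : Monotone (phiB α β) := by
  intro s t h
  simp only [phiB_eq_max_min hβ]
  gcongr

theorem continuous_phiB (hβ : 0 < β) : Continuous (phiB α β) := by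
  simp only [funext (phiB_eq_max_min hβ)]
  fun_prop

theorem abs_phiB_sub_phiB_le (hβ : 0 < β) (s t : ℝ) :
    |phiB α β s - phiB α β t| ≤ |s - t| / β := by
  simp only [phiB_eq_max_min hβ]
  calc _ ≤ |min ((s - α) / β) 1 - min ((t - α) / β) 1| := abs_max_sub_max_le_abs _ _ _
    _ ≤ max |(s - α) / β - (t - α) / β| |1 - 1| := abs_min_sub_min_le_max _ _ _ _
    _ = |s - t| / β := by
      rw [sub_self, abs_zero, max_eq_left (abs_nonneg _), ← sub_div, abs_div,
        abs_of_pos hβ, sub_sub_sub_cancel_right]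

theorem phiB_mul_add (hβ : 0 < β) {s : ℝ} (h0 : 0 ≤ s) (h1 : s ≤ 1) :
    phiB α β (β * s + α) = s := by
  rw [phiB_eq_max_min hβ, add_sub_cancel_right, mul_div_cancel_left₀ _ hβ.ne',
    min_eq_left h1, max_eq_left h0]

theorem le_of_phiB_eq_one {t : ℝ} (h : phiB α β t = 1) : α + β ≤ t := by
  unfold phiB at h
  split_ifs at h with h1 h2
  · exact absurd h zero_ne_one
  · exact h2
  · rw [div_eq_one_iff_eq (by rintro rfl; simp at h)] at h
    linarith

theorem eq_of_phiB_eq {t c : ℝ} (h : phiB α β t = c) (hc0 : 0 < c) (hc1 : c < 1) :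
    t = β * c + α := by
  unfold phiB at h
  split_ifs at h with h1 h2
  · linarith
  · linarith
  · have hβ : β ≠ 0 := by rintro rfl; simp at h; linarith
    rw [div_eq_iff hβ] at h
    linarith

end PhiB

theorem shft_iterate_apply (p : ℕ) (x : ℕ → ℕ) (j : ℕ) : shft^[p] x j = x (p + j) := by
  induction p generalizing x with
  | zero => simp
  | succ p ih =>
    rw [Function.iterate_succ_apply, ih (shft x)]
    exact congrArg x (by omega)

theorem shft_iterate_wcat (p : ℕ) (w y : ℕ → ℕ) : shft^[p] (wcat p w y) = y := by
  funext j
  rw [shft_iterate_apply, wcat, if_neg (by omega), Nat.add_sub_cancel_left]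

section PhiBInf

variable {α β : ℝ}

theorem phiBN_le_one (hβ : 0 < β) (n : ℕ) (x : ℕ → ℕ) : phiBN α β n x ≤ 1 := by
  cases n with
  | zero => exact zero_le_one
  | succ n => exact phiB_le_one hβ _

theorem monotone_phiBN (hβ : 0 < β) (x : ℕ → ℕ) : Monotone (fun n => phiBN α β n x) := by
  suffices h : ∀ n (x : ℕ → ℕ), phiBN α β n x ≤ phiBN α β (n + 1) x from
    monotone_nat_of_le_succ fun n => h n x
  intro n
  induction n with
  | zero => exact fun x => phiB_nonneg hβ _
  | succ n ih => exact fun x => phiB_mono hβ (by simpa using ih (shft x))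

theorem bddAbove_range_phiBN (hβ : 0 < β) (x : ℕ → ℕ) :
    BddAbove (range fun n => phiBN α β n x) :=
  ⟨1, forall_mem_range.2 fun n => phiBN_le_one hβ n x⟩

theorem phiBInf_nonneg (hβ : 0 < β) (x : ℕ → ℕ) : 0 ≤ phiBInf α β x :=
  le_ciSup_of_le (bddAbove_range_phiBN hβ x) 0 le_rfl

theorem phiBInf_le_one (hβ : 0 < β) (x : ℕ → ℕ) : phiBInf α β x ≤ 1 :=
  ciSup_le fun n => phiBN_le_one hβ n x

theorem tendsto_phiBN (hβ : 0 < β) (x : ℕ → ℕ) :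
    Tendsto (fun n => phiBN α β n x) atTop (nhds (phiBInf α β x)) :=
  tendsto_atTop_ciSup (monotone_phiBN hβ x) (bddAbove_range_phiBN hβ x)

theorem phiBInf_eq (hβ : 0 < β) (x : ℕ → ℕ) :
    phiBInf α β x = phiB α β (x 0 + phiBInf α β (shft x)) :=
  tendsto_nhds_unique ((tendsto_phiBN hβ x).comp (tendsto_add_atTop_nat 1))
    (((continuous_phiB hβ).tendsto _).comp ((tendsto_phiBN hβ (shft x)).const_add _))

theorem phiBInf_shft_iterate (hβ : 0 < β) (x : ℕ → ℕ) (m : ℕ) :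
    phiBInf α β (shft^[m] x) = phiB α β (x m + phiBInf α β (shft^[m + 1] x)) := by
  rw [phiBInf_eq hβ, shft_iterate_apply, Function.iterate_succ_apply']
  rfl

theorem phiBInf_zero (hα : 0 ≤ α) : phiBInf α β 0 = 0 := by
  have h : ∀ n, phiBN α β n 0 = 0 := by
    intro n
    induction n with
    | zero => rfl
    | succ n ih =>
      rw [phiBN, show shft (0 : ℕ → ℕ) = 0 from rfl, ih, Pi.zero_apply, Nat.cast_zero,
        add_zero]
      exact if_pos hα
  simp [phiBInf, h]

theorem phiBInf_pi_single_zero (hα : 0 ≤ α) (hβ : 0 < β) (a : ℕ) :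
    phiBInf α β (Pi.single 0 a) = phiB α β a := by
  have hshft : shft (Pi.single 0 a) = 0 := funext fun j => Pi.single_eq_of_ne j.succ_ne_zero _
  rw [phiBInf_eq hβ, hshft, phiBInf_zero hα, Pi.single_eq_same, add_zero]

end PhiBInf

theorem nonpos_of_le_div_succ {d : ℕ → ℝ} {β C : ℝ} (hβ : 1 < β) (hC : ∀ m, d m ≤ C)
    (h : ∀ m, d m ≤ d (m + 1) / β) (m : ℕ) : d m ≤ 0 := by
  have hβ0 : 0 < β := by linarith
  have hpow : ∀ n m, d m ≤ C * (β⁻¹) ^ n := by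
    intro n
    induction n with
    | zero => simpa using hC
    | succ n ih =>
      intro m
      calc d m ≤ d (m + 1) / β := h m
        _ ≤ C * (β⁻¹) ^ n / β := by gcongr; exact ih _
        _ = C * (β⁻¹) ^ (n + 1) := by rw [pow_succ]; ring
  have hlim : Tendsto (fun n => C * (β⁻¹) ^ n) atTop (nhds 0) := by
    simpa using (tendsto_pow_atTop_nhds_zero_of_lt_one (by positivity)
      (inv_lt_one_of_one_lt₀ hβ)).const_mul C
  exact ge_of_tendsto' hlim fun n => hpow n m

section Digits

variable {α β : ℝ}

noncomputable def digitHigh (α β y : ℝ) : ℕ := (⌈β * y + α⌉ - 1).toNat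

theorem Thigh_pos (y : ℝ) : 0 < Thigh α β y := by
  have := Int.ceil_lt_add_one (β * y + α)
  unfold Thigh; linarith

theorem Thigh_le_one (y : ℝ) : Thigh α β y ≤ 1 := by
  have := Int.le_ceil (β * y + α)
  unfold Thigh; linarith

theorem Thigh_iterate_pos (n : ℕ) : 0 < (Thigh α β)^[n] 1 := by
  cases n with
  | zero => exact one_pos
  | succ n => rw [Function.iterate_succ_apply']; exact Thigh_pos _

theorem Thigh_iterate_le_one (n : ℕ) : (Thigh α β)^[n] 1 ≤ 1 := by
  cases n with
  | zero => exact le_rfl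
  | succ n => rw [Function.iterate_succ_apply']; exact Thigh_le_one _

theorem Thigh_iterate_eq_one (h : Thigh α β 1 = 1) (n : ℕ) : (Thigh α β)^[n] 1 = 1 :=
  Function.iterate_fixed h n

theorem digitHigh_add_Thigh (hα : 0 ≤ α) (hβ : 0 < β) {y : ℝ} (hy : 0 < y) :
    (digitHigh α β y : ℝ) + Thigh α β y = β * y + α := by
  have hc : 0 < ⌈β * y + α⌉ := Int.ceil_pos.2 (by positivity)
  rw [digitHigh, ← Int.cast_natCast, Int.toNat_of_nonneg (by omega), Thigh]
  push_cast
  ring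

theorem phiB_digitHigh_add_Thigh (hα : 0 ≤ α) (hβ : 0 < β) {y : ℝ} (hy0 : 0 < y)
    (hy1 : y ≤ 1) : phiB α β (digitHigh α β y + Thigh α β y) = y := by
  rw [digitHigh_add_Thigh hα hβ hy0, phiB_mul_add hβ hy0.le hy1]

theorem digitHigh_one : digitHigh α β 1 = kAB α β - 1 := by
  rw [digitHigh, kAB, mul_one, add_comm]
  omega

theorem kAB_cast (hαβ : 0 ≤ α + β) : (kAB α β : ℝ) = ⌈α + β⌉ := by
  rw [kAB, ← Int.cast_natCast, Int.toNat_of_nonneg (Int.ceil_nonneg hαβ)]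

theorem Thigh_one (hαβ : 0 ≤ α + β) : Thigh α β 1 = α + β - kAB α β + 1 := by
  rw [Thigh, kAB_cast hαβ, mul_one, add_comm β]
  ring

theorem digitHigh_lt_kAB (hαβ : 0 < α + β) (hβ : 0 ≤ β) {y : ℝ} (hy : y ≤ 1) :
    digitHigh α β y < kAB α β := by
  have hle : ⌈β * y + α⌉ ≤ ⌈α + β⌉ := Int.ceil_mono (by nlinarith)
  have hpos : 0 < ⌈α + β⌉ := Int.ceil_pos.2 hαβ
  rw [digitHigh, kAB]
  omega

theorem eq_of_natCast_add_eq_natCast_add {a b : ℕ} {s t : ℝ} (hs0 : 0 ≤ s) (hs1 : s ≤ 1)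
    (ht0 : 0 < t) (ht1 : t < 1) (h : a + s = b + t) : a = b := by
  have hab : (a : ℝ) < b + 1 := by linarith
  have hba : (b : ℝ) < a + 1 := by linarith
  have hab' : a < b + 1 := by exact_mod_cast hab
  have hba' : b < a + 1 := by exact_mod_cast hba
  omega

end Digits

section Determination

variable {α β : ℝ}

theorem eq_kAB_sub_one_of_phiB_eq_one (hαβ : 0 ≤ α + β) {a : ℕ} {s : ℝ} (ha : a < kAB α β)
    (hs : s ≤ 1) (h : phiB α β (a + s) = 1) :
    a = kAB α β - 1 ∧ α + β - kAB α β + 1 ≤ s := by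
  have hk := kAB_cast hαβ
  have hsum := le_of_phiB_eq_one h
  have hceil := Int.ceil_lt_add_one (α + β)
  have hlow : kAB α β < a + 2 := by exact_mod_cast (by linarith : (kAB α β : ℝ) < a + 2)
  have hak : a + 1 = kAB α β := by omega
  refine ⟨by omega, ?_⟩
  rw [← hak, Nat.cast_succ]
  linarith

theorem eq_digitHigh_of_phiB_eq (hα : 0 ≤ α) (hβ : 0 < β) {a : ℕ} {s y : ℝ} (hs0 : 0 ≤ s)
    (hs1 : s ≤ 1) (hy0 : 0 < y) (hy1 : y < 1) (hT : Thigh α β y < 1)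
    (h : phiB α β (a + s) = y) : a = digitHigh α β y ∧ s = Thigh α β y := by
  have hsum : (a : ℝ) + s = digitHigh α β y + Thigh α β y := by
    rw [digitHigh_add_Thigh hα hβ hy0]
    exact eq_of_phiB_eq h hy0 hy1
  have ha := eq_of_natCast_add_eq_natCast_add hs0 hs1 (Thigh_pos y) hT hsum
  refine ⟨ha, ?_⟩
  rw [ha] at hsum
  linarith

end Determination

def IsSolutionAtOne (α β : ℝ) (x : ℕ → ℕ) : Prop :=
  (∀ i, x i < kAB α β) ∧ phiBInf α β x = 1 ∧ phiBInf α β (shft x) = α + β - kAB α β + 1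

section Coding

variable {α β : ℝ}

theorem vItin_eq_digitHigh (n : ℕ) : vItin α β n = digitHigh α β ((Thigh α β)^[n] 1) := rfl

theorem phiB_vItin_add (hα : 0 ≤ α) (hβ : 0 < β) (n : ℕ) :
    phiB α β (vItin α β n + (Thigh α β)^[n + 1] 1) = (Thigh α β)^[n] 1 := by
  rw [Function.iterate_succ_apply']
  exact phiB_digitHigh_add_Thigh hα hβ (Thigh_iterate_pos n) (Thigh_iterate_le_one n)

theorem vItin_lt_kAB (hα : 0 ≤ α) (hβ : 0 < β) (n : ℕ) : vItin α β n < kAB α β :=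
  digitHigh_lt_kAB (by linarith) hβ.le (Thigh_iterate_le_one n)

theorem vItin_zero : vItin α β 0 = kAB α β - 1 := digitHigh_one

theorem phiBInf_shft_iterate_vItin (hα : 0 ≤ α) (hβ : 1 < β) (n : ℕ) :
    phiBInf α β (shft^[n] (vItin α β)) = (Thigh α β)^[n] 1 := by
  have hβ0 : 0 < β := by linarith
  set d : ℕ → ℝ := fun m => |phiBInf α β (shft^[m] (vItin α β)) - (Thigh α β)^[m] 1|
  have hd1 : ∀ m, d m ≤ 1 := fun m =>
    abs_sub_le_of_nonneg_of_le (phiBInf_nonneg hβ0 _) (phiBInf_le_one hβ0 _)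
      (Thigh_iterate_pos m).le (Thigh_iterate_le_one m)
  have hcontr : ∀ m, d m ≤ d (m + 1) / β := by
    intro m
    simp only [d]
    rw [phiBInf_shft_iterate hβ0, ← phiB_vItin_add hα hβ0 m]
    exact (abs_phiB_sub_phiB_le hβ0 _ _).trans_eq (by rw [add_sub_add_left_eq_sub])
  exact sub_eq_zero.1 (abs_nonpos_iff.1 (nonpos_of_le_div_succ hβ hd1 hcontr n))

theorem phiBInf_vItin (hα : 0 ≤ α) (hβ : 1 < β) : phiBInf α β (vItin α β) = 1 :=
  phiBInf_shft_iterate_vItin hα hβ 0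

theorem isSolutionAtOne_vItin (hα : 0 ≤ α) (hβ : 1 < β) : IsSolutionAtOne α β (vItin α β) := by
  refine ⟨vItin_lt_kAB hα (by linarith), phiBInf_vItin hα hβ, ?_⟩
  rw [← Thigh_one (by linarith), ← Function.iterate_one (shft), ← Function.iterate_one (Thigh α β)]
  exact phiBInf_shft_iterate_vItin hα hβ 1

end Coding

section Uniqueness

variable {α β : ℝ}

theorem eq_vItin_of_isSolutionAtOne (hα : 0 ≤ α) (hβ : 1 < β)
    (hT : Thigh α β 1 = 1 ∨ ∀ n, 1 ≤ n → (Thigh α β)^[n] 1 ≠ 1) {x : ℕ → ℕ}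
    (hx : IsSolutionAtOne α β x) : x = vItin α β := by
  obtain ⟨hxk, hx0, hx1⟩ := hx
  have hβ0 : 0 < β := by linarith
  have hαβ : 0 ≤ α + β := by linarith
  set s : ℕ → ℝ := fun m => phiBInf α β (shft^[m] x)
  have hs : ∀ m, s m = phiB α β (x m + s (m + 1)) := phiBInf_shft_iterate hβ0 x
  set t : ℕ → ℝ := fun m => (Thigh α β)^[m] 1
  have hdigit : ∀ m, x m = vItin α β m ∧ s (m + 1) = t (m + 1) := by
    intro m
    induction m with
    | zero =>
      refine ⟨?_, by simpa [s, t, Thigh_one hαβ] using hx1⟩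
      rw [phiBInf_eq hβ0] at hx0
      exact vItin_zero ▸ (eq_kAB_sub_one_of_phiB_eq_one hαβ (hxk 0) (phiBInf_le_one hβ0 _) hx0).1
    | succ m ih =>
      rcases hT with hT1 | hTne
      · have hsm : phiB α β (x (m + 1) + s (m + 2)) = 1 := by
          rw [← hs, ih.2]; exact Thigh_iterate_eq_one hT1 _
        obtain ⟨hxm, hγ⟩ :=
          eq_kAB_sub_one_of_phiB_eq_one hαβ (hxk _) (phiBInf_le_one hβ0 _) hsm
        rw [← Thigh_one hαβ, hT1] at hγ
        refine ⟨by rw [hxm, vItin_eq_digitHigh, Thigh_iterate_eq_one hT1, digitHigh_one], ?_⟩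
        rw [show t (m + 2) = 1 from Thigh_iterate_eq_one hT1 _]
        exact le_antisymm (phiBInf_le_one hβ0 _) hγ
      · have hlt : ∀ n, 1 ≤ n → t n < 1 := fun n hn =>
          (Thigh_iterate_le_one n).lt_of_ne (hTne n hn)
        have hsm : phiB α β (x (m + 1) + s (m + 2)) = t (m + 1) := by rw [← hs, ih.2]
        have hstep : Thigh α β (t (m + 1)) = t (m + 2) :=
          (Function.iterate_succ_apply' _ _ _).symm
        obtain ⟨hxm, hsm'⟩ := eq_digitHigh_of_phiB_eq hα hβ0 (phiBInf_nonneg hβ0 _)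
          (phiBInf_le_one hβ0 _) (Thigh_iterate_pos _) (hlt _ (by omega))
          (hstep ▸ hlt _ (by omega)) hsm
        exact ⟨hxm, hsm'.trans hstep⟩
  exact funext fun m => (hdigit m).1

theorem phiBInf_shft_iterate_of_eq_vItin (hα : 0 ≤ α) (hβ : 0 < β) {x : ℕ → ℕ} {p : ℕ}
    (hx : ∀ i < p, x i = vItin α β i)
    (hp : phiBInf α β (shft^[p] x) = (Thigh α β)^[p] 1) {j : ℕ} (hj : j ≤ p) :
    phiBInf α β (shft^[j] x) = (Thigh α β)^[j] 1 := by
  induction hj using Nat.decreasingInduction with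
  | self => exact hp
  | of_succ j hj ih => rw [phiBInf_shft_iterate hβ, ih, hx j hj, phiB_vItin_add hα hβ]

theorem exists_isSolutionAtOne_ne_vItin (hα : 0 ≤ α) (hβ : 1 < β) (hT1 : Thigh α β 1 ≠ 1)
    {n : ℕ} (hn : 1 ≤ n) (hTn : (Thigh α β)^[n] 1 = 1) :
    ∃ y, IsSolutionAtOne α β y ∧ y ≠ vItin α β := by
  have hβ0 : 0 < β := by linarith
  have hαβ : 0 ≤ α + β := by linarith
  obtain ⟨m, rfl⟩ : ∃ m, n = m + 1 := ⟨n - 1, by omega⟩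
  have hm : 1 ≤ m := by
    rcases Nat.eq_zero_or_pos m with rfl | hm
    · exact absurd hTn hT1
    · exact hm
  have htm : (Thigh α β)^[m] 1 < 1 := by
    refine (Thigh_iterate_le_one m).lt_of_ne fun h => hT1 ?_
    rwa [Function.iterate_succ_apply', h] at hTn
  have hvm : (vItin α β m : ℝ) + 1 = β * (Thigh α β)^[m] 1 + α := by
    have := digitHigh_add_Thigh hα hβ0 (Thigh_iterate_pos (α := α) (β := β) m)
    rwa [← Function.iterate_succ_apply' (Thigh α β), hTn] at this
  have hvk : vItin α β m + 1 < kAB α β := by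
    have : (vItin α β m : ℝ) + 1 < kAB α β := by
      rw [hvm, kAB_cast hαβ]
      nlinarith [Int.le_ceil (α + β), Thigh_iterate_pos (α := α) (β := β) m]
    exact_mod_cast this
  set y := wcat m (vItin α β) (Pi.single 0 (vItin α β m + 1))
  have hy : ∀ i < m, y i = vItin α β i := fun i hi => if_pos hi
  have hym : y m = vItin α β m + 1 := by
    simp only [y, wcat, lt_irrefl, if_false, Nat.sub_self, Pi.single_eq_same]
  have hsm : phiBInf α β (shft^[m] y) = (Thigh α β)^[m] 1 := by
    rw [shft_iterate_wcat, phiBInf_pi_single_zero hα hβ0, Nat.cast_succ]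
    have := phiB_vItin_add hα hβ0 m
    rwa [hTn] at this
  refine ⟨y, ⟨fun i => ?_, ?_, ?_⟩, fun h => by simpa [hym] using congrFun h m⟩
  · rcases lt_trichotomy i m with hi | rfl | hi
    · exact hy i hi ▸ vItin_lt_kAB hα hβ0 i
    · exact hym ▸ hvk
    · have : y i = 0 := by
        simp only [y, wcat, if_neg hi.not_gt]
        exact Pi.single_eq_of_ne (Nat.sub_ne_zero_of_lt hi) _
      omega
  · exact phiBInf_shft_iterate_of_eq_vItin hα hβ0 hy hsm (Nat.zero_le m)
  · rw [← Thigh_one hαβ]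
    exact phiBInf_shft_iterate_of_eq_vItin hα hβ0 hy hsm hm

end Uniqueness

section Periodicity

variable {α β : ℝ}

theorem shft_iterate_vItin_eq_self_iff (hα : 0 ≤ α) (hβ : 1 < β) (p : ℕ) :
    shft^[p] (vItin α β) = vItin α β ↔ (Thigh α β)^[p] 1 = 1 := by
  refine ⟨fun h => ?_, fun h => funext fun j => ?_⟩
  · rw [← phiBInf_shft_iterate_vItin hα hβ, h, phiBInf_vItin hα hβ]
  · rw [shft_iterate_apply, vItin_eq_digitHigh, add_comm, Function.iterate_add_apply, h]
    rfl

theorem vItin_eq_const_iff (hα : 0 ≤ α) (hβ : 1 < β) :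
    vItin α β = (fun _ => kAB α β - 1) ↔ Thigh α β 1 = 1 := by
  rw [← Function.iterate_one (Thigh α β), ← shft_iterate_vItin_eq_self_iff hα hβ,
    Function.iterate_one]
  refine ⟨fun h => h ▸ rfl, fun h => funext fun n => ?_⟩
  induction n with
  | zero => exact vItin_zero
  | succ n ih => exact (congrFun h n).trans ih

end Periodicity

theorem uniqueness_at_one_general (α β : ℝ) (hα0 : 0 ≤ α) (hβ : 1 < β) :
    (0 < α + β - kAB α β + 1 ∧ α + β - kAB α β + 1 ≤ 1) ∧
    (phiBInf α β (vItin α β) = 1 ∧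
      phiBInf α β (shft (vItin α β)) = α + β - kAB α β + 1) ∧
    ((∃! v : ℕ → ℕ, (∀ i, v i < kAB α β) ∧
        phiBInf α β v = 1 ∧ phiBInf α β (shft v) = α + β - kAB α β + 1) ↔
      (Thigh α β 1 = 1 ∨ ∀ n, 1 ≤ n → (Thigh α β)^[n] 1 ≠ 1)) ∧
    ((Thigh α β 1 = 1 ∨ ∀ n, 1 ≤ n → (Thigh α β)^[n] 1 ≠ 1) ↔
      ((∀ p, 1 ≤ p → shft^[p] (vItin α β) ≠ vItin α β) ∨
        vItin α β = fun _ => kAB α β - 1)) := by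
  have hγ := Thigh_one (α := α) (β := β) (by linarith)
  have hv := isSolutionAtOne_vItin hα0 hβ
  refine ⟨hγ ▸ ⟨Thigh_pos 1, Thigh_le_one 1⟩, hv.2, ⟨fun huniq => ?_, fun hT => ?_⟩, ?_⟩
  · by_contra! hT
    obtain ⟨hT1, n, hn, hTn⟩ := hT
    obtain ⟨y, hy, hyv⟩ := exists_isSolutionAtOne_ne_vItin hα0 hβ hT1 hn hTn
    exact hyv (huniq.unique hy hv)
  · exact ⟨vItin α β, hv, fun x hx => eq_vItin_of_isSolutionAtOne hα0 hβ hT hx⟩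
  · simp only [ne_eq, shft_iterate_vItin_eq_self_iff hα0 hβ, vItin_eq_const_iff hα0 hβ]
    exact or_comm

/-- **Uniqueness criterion at 1.** Let `0 ≤ α < 1 < β`, `k = ⌈α+β⌉`, `γ = α+β−k+1`
(then `γ ∈ (0,1]`). The string `v^{α,β}` always satisfies `φ̄_∞^{α,β}(v^{α,β}) = 1` and
`φ̄_∞^{α,β}(σ v^{α,β}) = γ`, and the following are equivalent: (1) the equations
`φ̄_∞^{α,β}(v) = 1`, `φ̄_∞^{α,β}(σv) = γ` have exactly one solution `v ∈ A^ℕ`;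
(2) either `Ť_{α,β}(1) = 1` or `Ťⁿ_{α,β}(1) ≠ 1` for all `n ≥ 1`;
(3) `v^{α,β}` is not periodic or `v^{α,β} = (k−1)^∞`. -/
theorem uniqueness_at_one (α β : ℝ) (hα0 : 0 ≤ α) (hα1 : α < 1) (hβ : 1 < β) :
    (0 < α + β - kAB α β + 1 ∧ α + β - kAB α β + 1 ≤ 1) ∧
    (phiBInf α β (vItin α β) = 1 ∧
      phiBInf α β (shft (vItin α β)) = α + β - kAB α β + 1) ∧
    ((∃! v : ℕ → ℕ, (∀ i, v i < kAB α β) ∧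
        phiBInf α β v = 1 ∧ phiBInf α β (shft v) = α + β - kAB α β + 1) ↔
      (Thigh α β 1 = 1 ∨ ∀ n, 1 ≤ n → (Thigh α β)^[n] 1 ≠ 1)) ∧
    ((Thigh α β 1 = 1 ∨ ∀ n, 1 ≤ n → (Thigh α β)^[n] 1 ≠ 1) ↔
      ((∀ p, 1 ≤ p → shft^[p] (vItin α β) ≠ vItin α β) ∨
        vItin α β = fun _ => kAB α β - 1)) :=
  uniqueness_at_one_general α β hα0 hβ
end

section
/- Lipschitz dependence of φ̄_∞ on the parameters. Let k ≥ 2 and x ∈ A^ℕ. (1) If α ∈ [0,1] and 1 ≤ β < β′, then 0 ≤ φ̄_∞^{α,β}(x) − φ̄_∞^{α,β′}(x) ≤ (β′−β)/(β′−1). (2) If 0 ≤ α′ < α ≤ 1, β′ > 1, and α+β−k+1 = α′+β′−k+1 ∈ [0,1] (equal values of γ, so β = β′−(α−α′)), then 0 ≤ φ̄_∞^{α′,β′}(x) − φ̄_∞^{α,β}(x) ≤ (α−α′)/(β′−1). (3) For fixed α ∈ [0,1] and x ∈ A^ℕ, the map β ↦ φ̄_∞^{α,β}(x), defined for β ∈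 [1,∞), is continuous at β = 1 (from the right). -/
open Filter Set

/-!
Each `φ̄^{α,β'}` with `β' > 1` is a contraction with ratio `1/β'` in `t`, so if the one-step maps
of two parameter pairs differ by at most `δ`, the nested compositions differ by at most
`δ (1 + 1/β' + 1/β'² + ⋯) = δ β' / (β' - 1)`; for a change of `β` and for a shift of `α` at fixed
`α + β`, `δ` is `(β' - β)/β'` resp. `(α - α')/β'`. At `β = 1` there is no contraction, but the
depth-`n` bound `n (β - 1)`, together with the monotonicity of `φ̄_∞` in `β`, still gives
continuity.
-/

open Topology

section phiB

variable {a a' b b' s t : ℝ}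

lemma phiB_le_one_s10 (hb : 0 < b) : phiB a b t ≤ 1 := by
  unfold phiB
  split_ifs <;> (rw [← sub_nonneg]; field_simp; nlinarith)

lemma phiB_mono_s10 (hb : 0 < b) : Monotone (phiB a b) := by
  intro s t hst
  unfold phiB
  split_ifs <;> (rw [← sub_nonneg]; field_simp; nlinarith)

lemma phiB_le_add_inv_mul (hb : 0 < b) (hst : s ≤ t) :
    phiB a b t ≤ phiB a b s + b⁻¹ * (t - s) := by
  unfold phiB
  split_ifs <;> (rw [← sub_nonneg]; field_simp; nlinarith)

lemma phiB_anti_of_le (hb : 0 < b) (hbb : b ≤ b') : phiB a b' t ≤ phiB a b t := by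
  have hb' : 0 < b' := hb.trans_le hbb
  unfold phiB
  split_ifs <;> (rw [← sub_nonneg]; field_simp; nlinarith)

lemma phiB_le_add_of_le (hb : 0 < b) (hbb : b ≤ b') :
    phiB a b t ≤ phiB a b' t + (b' - b) / b' := by
  have hb' : 0 < b' := hb.trans_le hbb
  unfold phiB
  split_ifs <;> (rw [← sub_nonneg]; field_simp; nlinarith)

lemma phiB_le_of_add_eq (hb : 0 < b) (ha : a' ≤ a) (hab : a + b = a' + b') :
    phiB a b t ≤ phiB a' b' t := by
  have hb' : 0 < b' := by linarith
  unfold phiB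
  split_ifs <;> (rw [← sub_nonneg]; field_simp; nlinarith)

lemma phiB_le_add_of_add_eq (hb : 0 < b) (ha : a' ≤ a) (hab : a + b = a' + b') :
    phiB a' b' t ≤ phiB a b t + (a - a') / b' := by
  have hb' : 0 < b' := by linarith
  unfold phiB
  split_ifs <;> (rw [← sub_nonneg]; field_simp; nlinarith)

end phiB

section phiBN

variable {a b a₁ b₁ a₂ b₂ : ℝ}

lemma phiBN_le_one_s10 (hb : 0 < b) : ∀ n x, phiBN a b n x ≤ 1
  | 0, _ => zero_le_one
  | _ + 1, _ => phiB_le_one_s10 hb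

lemma phiBN_le_phiBInf (hb : 0 < b) (n : ℕ) (x : ℕ → ℕ) : phiBN a b n x ≤ phiBInf a b x :=
  le_ciSup (f := fun m => phiBN a b m x) ⟨1, by rintro _ ⟨m, rfl⟩; exact phiBN_le_one_s10 hb m x⟩ n

lemma phiBInf_le_add_of_phiBN_le {L : ℝ} (hb₂ : 0 < b₂) (x : ℕ → ℕ)
    (h : ∀ n, phiBN a₁ b₁ n x ≤ phiBN a₂ b₂ n x + L) : phiBInf a₁ b₁ x ≤ phiBInf a₂ b₂ x + L :=
  ciSup_le fun n => (h n).trans (by gcongr; exact phiBN_le_phiBInf hb₂ n x)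

lemma phiBInf_le_of_phiBN_le (hb₂ : 0 < b₂) (x : ℕ → ℕ)
    (h : ∀ n, phiBN a₁ b₁ n x ≤ phiBN a₂ b₂ n x) : phiBInf a₁ b₁ x ≤ phiBInf a₂ b₂ x := by
  simpa using phiBInf_le_add_of_phiBN_le (L := 0) hb₂ x (by simpa using h)

lemma phiBN_le_phiBN (hle : ∀ t, phiB a₁ b₁ t ≤ phiB a₂ b₂ t) (hmono : Monotone (phiB a₂ b₂)) :
    ∀ n x, phiBN a₁ b₁ n x ≤ phiBN a₂ b₂ n x
  | 0, _ => le_rfl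
  | n + 1, x => (hle _).trans (hmono (by gcongr; exact phiBN_le_phiBN hle hmono n (shft x)))

lemma phiBN_le_phiBN_add {δ c : ℝ} {L : ℕ → ℝ}
    (hle : ∀ t, phiB a₁ b₁ t ≤ phiB a₂ b₂ t) (hmono : Monotone (phiB a₂ b₂))
    (hstep : ∀ s t, s ≤ t → phiB a₂ b₂ t ≤ phiB a₁ b₁ s + δ + c * (t - s)) (hc : 0 ≤ c)
    (hL₀ : 0 ≤ L 0) (hL : ∀ n, δ + c * L n ≤ L (n + 1)) :
    ∀ n x, phiBN a₂ b₂ n x ≤ phiBN a₁ b₁ n x + L n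
  | 0, _ => by simpa [phiBN] using hL₀
  | n + 1, x => by
    have hF := phiBN_le_phiBN hle hmono n (shft x)
    have hG := phiBN_le_phiBN_add hle hmono hstep hc hL₀ hL n (shft x)
    have hstep' := hstep (x 0 + phiBN a₁ b₁ n (shft x)) (x 0 + phiBN a₂ b₂ n (shft x))
      (by linarith)
    rw [add_sub_add_left_eq_sub] at hstep'
    calc phiBN a₂ b₂ (n + 1) x
        ≤ phiBN a₁ b₁ (n + 1) x + δ + c * (phiBN a₂ b₂ n (shft x) - phiBN a₁ b₁ n (shft x)) :=
          hstep'
      _ ≤ phiBN a₁ b₁ (n + 1) x + (δ + c * L n) := by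
          have := mul_le_mul_of_nonneg_left (sub_le_iff_le_add'.2 hG) hc
          linarith
      _ ≤ phiBN a₁ b₁ (n + 1) x + L (n + 1) := by gcongr; exact hL n

end phiBN

section phiBInf

variable {α α' β β' : ℝ}

lemma phiBN_anti_of_le (hβ : 0 < β) (hββ' : β ≤ β') (n : ℕ) (x : ℕ → ℕ) :
    phiBN α β' n x ≤ phiBN α β n x :=
  phiBN_le_phiBN (fun _ => phiB_anti_of_le hβ hββ') (phiB_mono_s10 hβ) n x

lemma phiBInf_anti_of_le (hβ : 0 < β) (hββ' : β ≤ β') (x : ℕ → ℕ) :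
    phiBInf α β' x ≤ phiBInf α β x :=
  phiBInf_le_of_phiBN_le hβ x fun n => phiBN_anti_of_le hβ hββ' n x

lemma phiBInf_le_add_of_le (hβ : 0 < β) (hββ' : β ≤ β') (hβ' : 1 < β') (x : ℕ → ℕ) :
    phiBInf α β x ≤ phiBInf α β' x + (β' - β) / (β' - 1) := by
  have hβ'₀ : 0 < β' := by linarith
  refine phiBInf_le_add_of_phiBN_le hβ'₀ x fun n => phiBN_le_phiBN_add
    (δ := (β' - β) / β') (c := β'⁻¹) (L := fun _ => (β' - β) / (β' - 1))
    (fun _ => phiB_anti_of_le hβ hββ') (phiB_mono_s10 hβ) (fun s t hst => ?_) (by positivity)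
    (div_nonneg (by linarith) (by linarith)) (fun _ => le_of_eq ?_) n x
  · linarith [phiB_le_add_of_le (a := α) (t := t) hβ hββ',
      phiB_le_add_inv_mul (a := α) hβ'₀ hst]
  · field_simp [(sub_pos.2 hβ').ne']
    ring

lemma phiBInf_le_of_add_eq (hβ : 0 < β) (hα : α' ≤ α) (hsum : α + β = α' + β')
    (x : ℕ → ℕ) : phiBInf α β x ≤ phiBInf α' β' x :=
  phiBInf_le_of_phiBN_le (by linarith) x fun n =>
    phiBN_le_phiBN (fun _ => phiB_le_of_add_eq hβ hα hsum) (phiB_mono_s10 (by linarith)) n x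

lemma phiBInf_le_add_of_add_eq (hβ : 0 < β) (hα : α' ≤ α) (hβ' : 1 < β')
    (hsum : α + β = α' + β') (x : ℕ → ℕ) :
    phiBInf α' β' x ≤ phiBInf α β x + (α - α') / (β' - 1) := by
  have hβ'₀ : 0 < β' := by linarith
  refine phiBInf_le_add_of_phiBN_le hβ x fun n => phiBN_le_phiBN_add
    (δ := (α - α') / β') (c := β'⁻¹) (L := fun _ => (α - α') / (β' - 1))
    (fun _ => phiB_le_of_add_eq hβ hα hsum) (phiB_mono_s10 hβ'₀) (fun s t hst => ?_) (by positivity)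
    (div_nonneg (by linarith) (by linarith)) (fun _ => le_of_eq ?_) n x
  · linarith [phiB_le_add_of_add_eq (t := s) hβ hα hsum,
      phiB_le_add_inv_mul (a := α') hβ'₀ hst]
  · field_simp [(sub_pos.2 hβ').ne']
    ring

lemma phiBN_one_le_add_mul (hβ : 1 ≤ β) (n : ℕ) (x : ℕ → ℕ) :
    phiBN α 1 n x ≤ phiBN α β n x + n * (β - 1) := by
  have hβ₀ : 0 < β := by linarith
  refine phiBN_le_phiBN_add (δ := β - 1) (c := β⁻¹) (L := fun n => n * (β - 1))
    (fun _ => phiB_anti_of_le one_pos hβ) (phiB_mono_s10 one_pos) (fun s t hst => ?_)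
    (by positivity) (by simp) (fun m => ?_) n x
  · have hδ : (β - 1) / β ≤ β - 1 := div_le_self (by linarith) hβ
    linarith [phiB_le_add_of_le (a := α) (t := t) one_pos hβ,
      phiB_le_add_inv_mul (a := α) hβ₀ hst]
  · have hc : β⁻¹ ≤ 1 := inv_le_one_of_one_le₀ hβ
    push_cast
    nlinarith [mul_nonneg (m.cast_nonneg : (0 : ℝ) ≤ m) (sub_nonneg.2 hβ)]

lemma continuousWithinAt_phiBInf_one (α : ℝ) (x : ℕ → ℕ) :
    ContinuousWithinAt (fun β => phiBInf α β x) (Ici 1) 1 := by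
  refine tendsto_order.2 ⟨fun v hv => ?_, fun v hv => ?_⟩
  · obtain ⟨n, hn⟩ := exists_lt_of_lt_ciSup hv
    have hlim : Tendsto (fun β : ℝ => phiBN α 1 n x - n * (β - 1)) (𝓝[Ici 1] 1)
        (𝓝 (phiBN α 1 n x)) := by
      refine tendsto_nhdsWithin_of_tendsto_nhds ?_
      convert (show Continuous fun β : ℝ => phiBN α 1 n x - n * (β - 1) by fun_prop).tendsto 1
      simp
    filter_upwards [hlim.eventually (lt_mem_nhds hn), self_mem_nhdsWithin] with β hlt hβ
    have hβ : (1 : ℝ) ≤ β := hβ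
    linarith [phiBN_one_le_add_mul (α := α) hβ n x, phiBN_le_phiBInf (a := α) (by linarith) n x]
  · filter_upwards [self_mem_nhdsWithin] with β hβ
    exact (phiBInf_anti_of_le one_pos hβ x).trans_lt hv

end phiBInf

theorem phiInf_lipschitz_in_parameters_general (k : ℕ)
    (x : ℕ → ℕ) :
    (∀ α β β' : ℝ, 0 ≤ α → α ≤ 1 → 1 ≤ β → β < β' →
      0 ≤ phiBInf α β x - phiBInf α β' x ∧
      phiBInf α β x - phiBInf α β' x ≤ (β' - β) / (β' - 1)) ∧
    (∀ α α' β β' : ℝ, 0 ≤ α' → α' < α → α ≤ 1 → 1 < β' →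
      α + β - k + 1 = α' + β' - k + 1 →
      α + β - k + 1 ∈ Set.Icc (0 : ℝ) 1 →
      0 ≤ phiBInf α' β' x - phiBInf α β x ∧
      phiBInf α' β' x - phiBInf α β x ≤ (α - α') / (β' - 1)) ∧
    (∀ α : ℝ, 0 ≤ α → α ≤ 1 →
      ContinuousWithinAt (fun β : ℝ => phiBInf α β x) (Set.Ici (1 : ℝ)) 1) := by
  refine ⟨fun α β β' _ _ hβ hββ' => ?_, fun α α' β β' hα' hαα' hα hβ' hsum _ => ?_,
    fun α _ _ => continuousWithinAt_phiBInf_one α x⟩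
  · have hanti := phiBInf_anti_of_le (α := α) (by linarith) hββ'.le x
    have hlip := phiBInf_le_add_of_le (α := α) (by linarith) hββ'.le (by linarith) x
    constructor <;> linarith
  · have hsum : α + β = α' + β' := by linarith
    have hβ : 0 < β := by linarith
    have hmono := phiBInf_le_of_add_eq hβ hαα'.le hsum x
    have hlip := phiBInf_le_add_of_add_eq hβ hαα'.le hβ' hsum x
    constructor <;> linarith

/-- **Lipschitz dependence of `φ̄_∞` on the parameters.** Let `k ≥ 2` and `x ∈ A^ℕ`.
(1) If `α ∈ [0,1]` and `1 ≤ β < β′`, then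
`0 ≤ φ̄_∞^{α,β}(x) − φ̄_∞^{α,β′}(x) ≤ (β′−β)/(β′−1)`.
(2) If `0 ≤ α′ < α ≤ 1`, `β′ > 1` and `α+β−k+1 = α′+β′−k+1 ∈ [0,1]`, then
`0 ≤ φ̄_∞^{α′,β′}(x) − φ̄_∞^{α,β}(x) ≤ (α−α′)/(β′−1)`.
(3) For fixed `α ∈ [0,1]`, the map `β ↦ φ̄_∞^{α,β}(x)` is continuous at `β = 1`
from the right. -/
theorem phiInf_lipschitz_in_parameters (k : ℕ) (hk : 2 ≤ k)
    (x : ℕ → ℕ) (hx : ∀ i, x i < k) :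
    (∀ α β β' : ℝ, 0 ≤ α → α ≤ 1 → 1 ≤ β → β < β' →
      0 ≤ phiBInf α β x - phiBInf α β' x ∧
      phiBInf α β x - phiBInf α β' x ≤ (β' - β) / (β' - 1)) ∧
    (∀ α α' β β' : ℝ, 0 ≤ α' → α' < α → α ≤ 1 → 1 < β' →
      α + β - k + 1 = α' + β' - k + 1 →
      α + β - k + 1 ∈ Set.Icc (0 : ℝ) 1 →
      0 ≤ phiBInf α' β' x - phiBInf α β x ∧
      phiBInf α' β' x - phiBInf α β x ≤ (α - α') / (β' - 1)) ∧
    (∀ α : ℝ, 0 ≤ α → α ≤ 1 →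
      ContinuousWithinAt (fun β : ℝ => phiBInf α β x) (Set.Ici (1 : ℝ)) 1) :=
  phiInf_lipschitz_in_parameters_general k x
end
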